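/- Let n be odd. Then Σ_{i=0}^{n} |K_i((n-1)/2, n)| = 2^{(n+1)/2}. -/

import Mathlib

/-!
For `n = 2m + 1`, `K_i(m, n)` is the coefficient of `X^i` in
`(1 - X)^m (1 + X)^(m + 1) = (1 - X^2)^m (1 + X)`, so `K_i(m, n) = (-1)^⌊i/2⌋ C(m, ⌊i/2⌋)`.
Each binomial coefficient `C(m, t)` thus occurs twice in absolute value, and the sum is `2 · 2^m`.
-/

open Finset

def K (i k n : ℕ) : ℤ :=
  ∑ j ∈ Finset.range (i + 1), (-1) ^ j * (Nat.choose k j) * (Nat.choose (n - k) (i - j))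

namespace Polynomial

variable {R : Type*} [CommRing R]

theorem coeff_one_sub_X_pow (m k : ℕ) :
    ((1 - X : R[X]) ^ m).coeff k = (-1) ^ k * m.choose k := by
  have h : (1 - X : R[X]) ^ m = ((1 + X) ^ m).comp (C (-1) * X) := by
    simp [sub_eq_add_neg]
  rw [h, comp_C_mul_X_coeff, coeff_one_add_X_pow, mul_comm]

theorem coeff_expand_two_mul_one_add_X (p : R[X]) (i : ℕ) :
    (expand R 2 p * (1 + X)).coeff i = p.coeff (i / 2) := by
  rw [mul_add, mul_one, coeff_add]
  rcases Nat.even_or_odd' i with ⟨t, rfl | rfl⟩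
  · rw [coeff_expand_mul' two_pos, Nat.mul_div_cancel_left _ two_pos]
    cases t with
    | zero => simp
    | succ t =>
      rw [show 2 * (t + 1) = 2 * t + 1 + 1 by ring, coeff_mul_X, coeff_expand two_pos,
        if_neg (by omega), add_zero]
  · rw [coeff_mul_X, coeff_expand_mul' two_pos, coeff_expand two_pos, if_neg (by omega), zero_add,
      Nat.mul_add_div two_pos, Nat.div_eq_of_lt one_lt_two, add_zero]

end Polynomial

theorem Finset.sum_range_two_mul_div_two {M : Type*} [AddCommMonoid M] (f : ℕ → M) (N : ℕ) :
    ∑ i ∈ range (2 * N), f (i / 2) = 2 • ∑ t ∈ range N, f t := by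
  induction N with
  | zero => simp
  | succ N ih =>
    rw [show 2 * (N + 1) = 2 * N + 1 + 1 by ring, sum_range_succ, sum_range_succ, ih,
      sum_range_succ, smul_add, two_nsmul (f N), Nat.mul_div_cancel_left _ two_pos,
      Nat.mul_add_div two_pos]
    simp [add_assoc]

open Polynomial

theorem K_eq_coeff (i k n : ℕ) : K i k n = ((1 - X : ℤ[X]) ^ k * (1 + X) ^ (n - k)).coeff i := by
  rw [coeff_mul, Nat.sum_antidiagonal_eq_sum_range_succ_mk]
  simp only [coeff_one_sub_X_pow, coeff_one_add_X_pow]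
  rfl

theorem K_middle (m i : ℕ) : K i m (2 * m + 1) = (-1) ^ (i / 2) * m.choose (i / 2) := by
  have h : (1 - X : ℤ[X]) ^ m * (1 + X) ^ (2 * m + 1 - m) = expand ℤ 2 ((1 - X) ^ m) * (1 + X) := by
    rw [show 2 * m + 1 - m = m + 1 by omega, map_pow, map_sub, map_one, expand_X, pow_succ,
      ← mul_assoc, ← mul_pow]
    ring
  rw [K_eq_coeff, h, coeff_expand_two_mul_one_add_X, coeff_one_sub_X_pow]

theorem abs_K_middle (m i : ℕ) : |K i m (2 * m + 1)| = m.choose (i / 2) := by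
  rw [K_middle, abs_mul, abs_pow, abs_neg, abs_one, one_pow, one_mul, Nat.abs_cast]

theorem stmt11 (n : ℕ) (hn : Odd n) :
    ∑ i ∈ Finset.range (n + 1), |K i ((n - 1) / 2) n| = 2 ^ ((n + 1) / 2) := by
  obtain ⟨m, rfl⟩ := hn
  rw [show (2 * m + 1 - 1) / 2 = m by omega, show (2 * m + 1 + 1) / 2 = m + 1 by omega,
    show 2 * m + 1 + 1 = 2 * (m + 1) by ring]
  simp_rw [abs_K_middle]
  rw [Finset.sum_range_two_mul_div_two (fun t => (m.choose t : ℤ)), ← Nat.cast_sum,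
    Nat.sum_range_choose]
  push_cast
  ring
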